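/- arXiv:2511.10267 — 2 statements merged into one kernel-verified Lean document; each statement's English description precedes it below -/
import Mathlib

section
/- Weighted factorial sum bound (auxiliary estimate in the proof of Theorem 3): For every natural number m ≥ 1, Σ_{r=−m}^{m} (Π_{r'=1}^{m} (r'² + 4)) / ((m − r)!·(m + r)!) ≤ sinh(2π)·4^m·(m!)² / (2π·(2m)!). -/
/-!
The sum is `∏ (k² + 4)` times `∑ 1/((m-r)!(m+r)!) = 4^m/(2m)!` (binomial theorem for
`(1 + 1)^(2m)`). Writing `∏ (k² + 4) = (m!)² ∏ (1 + 4/k²)`, the remaining partial product is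
bounded by its limit `sinh(2π)/(2π)`, given by Euler's product for `sin` evaluated at `2i`.
-/

open scoped Real Nat
open Finset Filter Topology

theorem Real.tendsto_euler_sinh_prod (x : ℝ) :
    Tendsto (fun n : ℕ => π * x * ∏ j ∈ range n, (1 + x ^ 2 / ((j : ℝ) + 1) ^ 2)) atTop
      (𝓝 (sinh (π * x))) := by
  have h := (Complex.continuous_im.tendsto _).comp (Complex.tendsto_euler_sin_prod (x * Complex.I))
  convert h using 2 with n
  · have hfac (j : ℕ) : 1 - (x * Complex.I) ^ 2 / ((j : ℂ) + 1) ^ 2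
        = ((1 + x ^ 2 / ((j : ℝ) + 1) ^ 2 : ℝ) : ℂ) := by
      push_cast; rw [mul_pow, Complex.I_sq]; ring
    simp only [Function.comp_apply, hfac, ← Complex.ofReal_prod, ← mul_assoc,
      Complex.mul_im, Complex.mul_re, Complex.ofReal_re, Complex.ofReal_im,
      Complex.I_re, Complex.I_im]
    ring
  · rw [← mul_assoc, ← Complex.ofReal_mul, Complex.sin_mul_I, ← Complex.ofReal_sinh,
      Complex.mul_I_im, Complex.ofReal_re]

theorem Real.mul_prod_one_add_sq_div_sq_le_sinh {x : ℝ} (hx : 0 ≤ x) (n : ℕ) :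
    π * x * ∏ j ∈ range n, (1 + x ^ 2 / ((j : ℝ) + 1) ^ 2) ≤ sinh (π * x) := by
  refine Monotone.ge_of_tendsto (monotone_nat_of_le_succ fun k => ?_)
    (tendsto_euler_sinh_prod x) n
  rw [prod_range_succ, ← mul_assoc]
  exact le_mul_of_one_le_right (by positivity) (le_add_of_nonneg_right (by positivity))

theorem prod_Icc_sq_add {K : Type*} [Field K] [CharZero K] (c : K) (m : ℕ) :
    ∏ k ∈ Icc 1 m, ((k : K) ^ 2 + c) =
      (m ! : K) ^ 2 * ∏ j ∈ range m, (1 + c / ((j : K) + 1) ^ 2) := by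
  rw [← Ico_add_one_right_eq_Icc, prod_Ico_eq_prod_range, ← prod_range_add_one_eq_factorial,
    Nat.cast_prod, ← prod_pow, ← prod_mul_distrib]
  refine prod_congr rfl fun j _ => ?_
  have := pow_ne_zero 2 (Nat.cast_add_one_ne_zero (R := K) j)
  push_cast
  field_simp
  ring

theorem sum_antidiagonal_inv_factorial_mul_factorial {K : Type*} [Field K] [CharZero K] (n : ℕ) :
    ∑ p ∈ antidiagonal n, ((p.1 ! : K) * p.2 !)⁻¹ = 2 ^ n / n ! := by
  have hterm (p) (hp : p ∈ antidiagonal n) : ((p.1 ! : K) * p.2 !)⁻¹ = n.choose p.1 / n ! := by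
    rw [HasAntidiagonal.mem_antidiagonal] at hp
    rw [← hp, Nat.cast_add_choose,
      div_div_cancel_left' (by exact_mod_cast (p.1 + p.2).factorial_ne_zero)]
  rw [sum_congr rfl hterm, ← sum_div]
  congr 1
  simpa [one_add_one_eq_two] using ((Commute.one_left (1 : K)).add_pow' n).symm

theorem sum_Icc_inv_factorial_mul_factorial {K : Type*} [Field K] [CharZero K] (n : ℕ) :
    ∑ r ∈ Icc (-(n : ℤ)) n, (((n - r).toNat ! : K) * (n + r).toNat !)⁻¹ =
      4 ^ n / (2 * n)! := by
  rw [show (4 : K) ^ n = 2 ^ (2 * n) by rw [pow_mul]; norm_num,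
    ← sum_antidiagonal_inv_factorial_mul_factorial]
  refine sum_nbij' (fun r => ((n - r).toNat, (n + r).toNat)) (fun p => (p.2 : ℤ) - n) ?_ ?_ ?_ ?_
    fun _ _ => rfl
  all_goals
    intro _
    simp only [mem_Icc, HasAntidiagonal.mem_antidiagonal, Prod.ext_iff]
    omega

theorem weighted_factorial_sum_bound_general (m : ℕ) :
    ∑ r ∈ Finset.Icc (-(m : ℤ)) (m : ℤ),
        (∏ r' ∈ Finset.Icc 1 m, ((r' : ℝ) ^ 2 + 4)) /
          ((Nat.factorial ((m : ℤ) - r).toNat : ℝ) *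
            (Nat.factorial ((m : ℤ) + r).toNat : ℝ)) ≤
      Real.sinh (2 * π) * 4 ^ m * (Nat.factorial m : ℝ) ^ 2 /
        (2 * π * (Nat.factorial (2 * m) : ℝ)) := by
  simp only [div_eq_mul_inv _ ((_ : ℝ) * _), ← mul_sum, sum_Icc_inv_factorial_mul_factorial,
    prod_Icc_sq_add]
  have hprod :
      ∏ j ∈ range m, (1 + 4 / ((j : ℝ) + 1) ^ 2) ≤ Real.sinh (2 * π) / (2 * π) := by
    have h := Real.mul_prod_one_add_sq_div_sq_le_sinh zero_le_two m
    rw [show (2 : ℝ) ^ 2 = 4 by norm_num, mul_comm π] at h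
    rw [le_div_iff₀ (by positivity)]
    linarith
  calc (m ! : ℝ) ^ 2 * (∏ j ∈ range m, (1 + 4 / ((j : ℝ) + 1) ^ 2)) * (4 ^ m / (2 * m)!)
      ≤ (m ! : ℝ) ^ 2 * (Real.sinh (2 * π) / (2 * π)) * (4 ^ m / (2 * m)!) := by gcongr
    _ = _ := by ring

/-- **Weighted factorial sum bound** (auxiliary estimate in the proof of Theorem 3).
For every natural `m ≥ 1`,
`∑_{r=-m}^{m} (∏_{r'=1}^{m} (r'² + 4)) / ((m-r)!(m+r)!) ≤ sinh(2π)·4^m·(m!)²/(2π·(2m)!)`. -/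
theorem weighted_factorial_sum_bound (m : ℕ) (hm : 1 ≤ m) :
    ∑ r ∈ Finset.Icc (-(m : ℤ)) (m : ℤ),
        (∏ r' ∈ Finset.Icc 1 m, ((r' : ℝ) ^ 2 + 4)) /
          ((Nat.factorial ((m : ℤ) - r).toNat : ℝ) *
            (Nat.factorial ((m : ℤ) + r).toNat : ℝ)) ≤
      Real.sinh (2 * π) * 4 ^ m * (Nat.factorial m : ℝ) ^ 2 /
        (2 * π * (Nat.factorial (2 * m) : ℝ)) :=
  weighted_factorial_sum_bound_general m
end

section
/- Auxiliary-pole error bound for the pole 2i (second error estimate in the proof of Theorem 3, time-independent form): Let H and L be Hermitian d×d complex matrices, let T ≥ 0, let α ∈ ℝ satisfy ⟨v, Lv⟩ ≤ α‖v‖² for all v, let a > 0, and let m ≥ 1. Then ‖(e^{−2πa} − 1)·exp(T(−iH + 2L)) / ((e^{4πa} − 1)·Π_{r=−m}^{m} ((r − i)/(r + 2i)))‖ ≤ sinh(2π)·e^{2Tα} / (π·(e^{4πa} − 1)). -/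
/-!
The matrix `G = T(-iH + 2L)` satisfies `Re ⟨v, G v⟩ ≤ 2Tα ‖v‖²`, because the Hermitian `H`
contributes only an imaginary part. So `G - 2Tα` is dissipative, `t ↦ ‖e^{t(G - 2Tα)} v‖` is
nonincreasing, and `‖e^G‖ = e^{2Tα} ‖e^{G - 2Tα}‖ ≤ e^{2Tα}`.

For the scalar, `∏_{r=-m}^{m} |r + ix| = |x| (m!)² ∏_{k=1}^{m} (1 + x²/k²)`, so the modulus of
the pole product is `P_m(1) / (2 P_m(2))` with `P_m(x) = ∏_{k=1}^{m} (1 + x²/k²)`. The ratio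
`P_m(1)/P_m(2)` decreases in `m` to its limit `(sinh π/π)/(sinh 2π/2π)` given by Euler's sine
product, so the pole product has modulus at least `sinh π / sinh 2π ≥ π / sinh 2π`.
-/

open Matrix Complex Filter Topology Finset Nat
open scoped Real Matrix.Norms.L2Operator ComplexInnerProductSpace

section Dissipative

variable {E : Type*} [NormedAddCommGroup E] [InnerProductSpace ℂ E] [CompleteSpace E]

theorem antitone_norm_exp_smul_apply_sq {B : E →L[ℂ] E} (hB : ∀ x, (⟪x, B x⟫).re ≤ 0) (v : E) :
    Antitone fun t : ℝ => ‖NormedSpace.exp (t • B) v‖ ^ 2 := by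
  let : InnerProductSpace ℝ E := .complexToReal
  have hu (t : ℝ) : HasDerivAt (fun t : ℝ => NormedSpace.exp (t • B) v)
      (B (NormedSpace.exp (t • B) v)) t :=
    ((ContinuousLinearMap.apply ℂ E v).restrictScalars ℝ).hasFDerivAt.comp_hasDerivAt
      t (hasDerivAt_exp_smul_const' (𝕂 := ℝ) B t)
  refine antitone_of_hasDerivAt_nonpos (fun t => (hu t).norm_sq) fun t => ?_
  rw [real_inner_eq_re_inner ℂ]
  exact mul_nonpos_of_nonneg_of_nonpos zero_le_two (hB _)

theorem norm_exp_le_one_of_re_inner_nonpos {B : E →L[ℂ] E} (hB : ∀ x, (⟪x, B x⟫).re ≤ 0) :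
    ‖NormedSpace.exp B‖ ≤ 1 := by
  refine ContinuousLinearMap.opNorm_le_bound _ zero_le_one fun v => ?_
  have h := antitone_norm_exp_smul_apply_sq hB v zero_le_one
  simp only [zero_smul, NormedSpace.exp_zero, one_smul] at h
  simpa using (pow_le_pow_iff_left₀ (norm_nonneg _) (norm_nonneg _) two_ne_zero).mp h

theorem norm_exp_le_of_re_inner_le {B : E →L[ℂ] E} {c : ℝ}
    (hB : ∀ x, (⟪x, B x⟫).re ≤ c * ‖x‖ ^ 2) : ‖NormedSpace.exp B‖ ≤ Real.exp c := by
  -- the algebraic lemmas about `exp` are stated over a normed `ℚ`-algebra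
  let +nondep : NormedAlgebra ℚ (E →L[ℂ] E) := .restrictScalars ℚ ℂ _
  have hsplit : B = algebraMap ℂ _ c + (B - algebraMap ℂ _ c) := by abel
  rw [hsplit, NormedSpace.exp_add_of_commute (Algebra.commutes _ _),
    ← NormedSpace.algebraMap_exp_comm, Algebra.algebraMap_eq_smul_one, smul_one_mul, norm_smul,
    ← Complex.exp_eq_exp_ℂ, ← ofReal_exp, norm_real, Real.norm_of_nonneg (Real.exp_pos c).le]
  refine mul_le_of_le_one_right (Real.exp_pos c).le
    (norm_exp_le_one_of_re_inner_nonpos fun x => ?_)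
  simpa [Algebra.algebraMap_eq_smul_one, inner_sub_right, inner_smul_right, ← ofReal_pow]
    using hB x

end Dissipative

theorem Matrix.norm_exp_le_of_re_star_dotProduct_mulVec_le {n : Type*} [Fintype n]
    [DecidableEq n] {A : Matrix n n ℂ} {c : ℝ}
    (hA : ∀ v : n → ℂ, (star v ⬝ᵥ A *ᵥ v).re ≤ c * (star v ⬝ᵥ v).re) :
    ‖NormedSpace.exp A‖ ≤ Real.exp c := by
  let +nondep : NormedAlgebra ℚ (Matrix n n ℂ) := .restrictScalars ℚ ℂ _
  have hiso : Isometry (toEuclideanCLM (n := n) (𝕜 := ℂ)) :=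
    AddMonoidHomClass.isometry_of_norm _ fun _ => rfl
  rw [cstar_norm_def, NormedSpace.map_exp _ hiso.continuous]
  refine norm_exp_le_of_re_inner_le fun x => ?_
  have hquad : ⟪x, toEuclideanCLM (n := n) (𝕜 := ℂ) A x⟫ = star x.ofLp ⬝ᵥ A *ᵥ x.ofLp := by
    rw [EuclideanSpace.inner_eq_star_dotProduct, dotProduct_comm]
    simp
  have hnorm : ‖x‖ ^ 2 = (star x.ofLp ⬝ᵥ x.ofLp).re := by
    rw [← inner_self_eq_norm_sq (𝕜 := ℂ), RCLike.re_to_complex,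
      EuclideanSpace.inner_eq_star_dotProduct, dotProduct_comm]
  rw [hquad, hnorm]
  exact hA _

theorem Matrix.IsHermitian.re_star_dotProduct_smul_neg_I_smul_add_mulVec {n : Type*} [Fintype n]
    {H : Matrix n n ℂ} (hH : H.IsHermitian) (L : Matrix n n ℂ) (T : ℝ) (v : n → ℂ) :
    (star v ⬝ᵥ ((T : ℂ) • ((-I) • H + (2 : ℂ) • L)) *ᵥ v).re =
      2 * T * (star v ⬝ᵥ L *ᵥ v).re := by
  have hH' : (star v ⬝ᵥ H *ᵥ v).im = 0 := hH.im_star_dotProduct_mulVec_self v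
  simp [add_mulVec, smul_mulVec, neg_mulVec, dotProduct_add, dotProduct_smul, dotProduct_neg,
    smul_smul, hH', mul_comm T 2]

noncomputable def sinhPartialProd (x : ℝ) (n : ℕ) : ℝ :=
  ∏ k ∈ range n, (1 + x ^ 2 / ((k : ℝ) + 1) ^ 2)

theorem tendsto_sinhPartialProd {x : ℝ} (hx : x ≠ 0) :
    Tendsto (sinhPartialProd x) atTop (𝓝 (Real.sinh (π * x) / (π * x))) := by
  have hc : (π * x * I : ℂ) ≠ 0 := by simp [hx, Real.pi_ne_zero]
  have heuler (n : ℕ) :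
      (π * (x * I) * ∏ j ∈ range n, (1 - (x * I) ^ 2 / ((j : ℂ) + 1) ^ 2) : ℂ) =
        π * x * I * (sinhPartialProd x n : ℂ) := by
    simp [sinhPartialProd, mul_pow, mul_assoc, neg_div]
  have hsin :
      Complex.sin (π * (x * I)) = π * x * I * ((Real.sinh (π * x) / (π * x) : ℝ) : ℂ) := by
    have : (x : ℂ) ≠ 0 := by exact_mod_cast hx
    rw [← mul_assoc, sin_mul_I]
    push_cast
    field_simp
  rw [← tendsto_ofReal_iff]
  simpa only [heuler, hsin, inv_mul_cancel_left₀ hc] using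
    (Complex.tendsto_euler_sin_prod (x * I)).const_mul (π * x * I : ℂ)⁻¹

theorem div_sinhPartialProd_le {x y : ℝ} (hx : x ≠ 0) (hxy : |x| ≤ |y|) (n : ℕ) :
    Real.sinh (π * x) / (π * x) / (Real.sinh (π * y) / (π * y)) ≤
      sinhPartialProd x n / sinhPartialProd y n := by
  have hπy : π * y ≠ 0 := mul_ne_zero Real.pi_ne_zero (by rintro rfl; simp_all)
  have hsq : x ^ 2 ≤ y ^ 2 := sq_le_sq.mpr hxy
  refine Antitone.le_of_tendsto (antitone_nat_of_succ_le fun k => ?_)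
    ((tendsto_sinhPartialProd hx).div (tendsto_sinhPartialProd (right_ne_zero_of_mul hπy))
      (div_ne_zero (Real.sinh_ne_zero.mpr hπy) hπy)) n
  simp only [Pi.div_apply, sinhPartialProd, prod_range_succ]
  rw [mul_div_mul_comm]
  refine mul_le_of_le_one_right (by positivity) ?_
  rw [div_le_one (by positivity)]
  gcongr

theorem norm_intCast_add_mul_I (r : ℤ) (x : ℝ) : ‖(r : ℂ) + x * I‖ = √((r : ℝ) ^ 2 + x ^ 2) := by
  exact_mod_cast norm_add_mul_I r x

theorem prod_norm_intCast_add_mul_I (x : ℝ) (m : ℕ) :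
    ∏ r ∈ Icc (-(m : ℤ)) m, ‖(r : ℂ) + x * I‖ = |x| * (m ! : ℝ) ^ 2 * sinhPartialProd x m := by
  induction m with
  | zero => simp [sinhPartialProd]
  | succ m ih =>
    have hIcc : Icc (-((m + 1 : ℕ) : ℤ)) (m + 1 : ℕ) =
        insert (-((m + 1 : ℕ) : ℤ)) (insert ((m + 1 : ℕ) : ℤ) (Icc (-(m : ℤ)) m)) := by
      ext r
      simp only [mem_Icc, mem_insert]
      omega
    have hpair : ‖(↑(-((m + 1 : ℕ) : ℤ)) : ℂ) + x * I‖ * ‖(((m + 1 : ℕ) : ℤ) : ℂ) + x * I‖ =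
        ((m : ℝ) + 1) ^ 2 + x ^ 2 := by
      rw [norm_intCast_add_mul_I, norm_intCast_add_mul_I, Int.cast_neg, neg_sq,
        Real.mul_self_sqrt (by positivity)]
      push_cast
      ring
    rw [hIcc, prod_insert (by simp only [mem_insert, mem_Icc]; omega),
      prod_insert (by simp only [mem_Icc]; omega), ← mul_assoc, hpair, ih, sinhPartialProd,
      sinhPartialProd, prod_range_succ, factorial_succ]
    push_cast
    field_simp

theorem norm_prod_Icc_sub_I_div_add_two_mul_I (m : ℕ) :
    ‖∏ r ∈ Icc (-(m : ℤ)) m, ((r : ℂ) - I) / ((r : ℂ) + 2 * I)‖ =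
      sinhPartialProd 1 m / (2 * sinhPartialProd 2 m) := by
  have hnum (r : ℤ) : (r : ℂ) - I = r + ((-1 : ℝ) : ℂ) * I := by push_cast; ring
  have hden (r : ℤ) : (r : ℂ) + 2 * I = r + ((2 : ℝ) : ℂ) * I := by push_cast; ring
  have heven : sinhPartialProd (-1) m = sinhPartialProd 1 m := by simp [sinhPartialProd]
  simp only [norm_prod, norm_div, prod_div_distrib, hnum, hden, prod_norm_intCast_add_mul_I, heven]
  field_simp
  norm_num

theorem sinh_pi_div_sinh_two_pi_le_norm_prod (m : ℕ) :
    Real.sinh π / Real.sinh (2 * π) ≤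
      ‖∏ r ∈ Icc (-(m : ℤ)) m, ((r : ℂ) - I) / ((r : ℂ) + 2 * I)‖ := by
  have h := div_sinhPartialProd_le one_ne_zero (y := 2) (by norm_num) m
  rw [norm_prod_Icc_sub_I_div_add_two_mul_I, mul_comm 2 (sinhPartialProd 2 m), ← div_div]
  calc Real.sinh π / Real.sinh (2 * π)
      = Real.sinh (π * 1) / (π * 1) / (Real.sinh (π * 2) / (π * 2)) / 2 := by
        rw [mul_comm π 2]; field_simp
    _ ≤ _ := div_le_div_of_nonneg_right h zero_le_two

theorem abs_exp_sub_one_le_one {x : ℝ} (hx : x ≤ 0) : |Real.exp x - 1| ≤ 1 := by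
  rw [abs_sub_comm, abs_of_nonneg (sub_nonneg.mpr (Real.exp_le_one_iff.mpr hx))]
  linarith [Real.exp_pos x]

theorem auxiliary_pole_two_i_bound_general
    (d : ℕ) (H L : Matrix (Fin d) (Fin d) ℂ)
    (hH : H.IsHermitian)
    (T : ℝ) (hT : 0 ≤ T)
    (α : ℝ) (hα : ∀ v : Fin d → ℂ, (star v ⬝ᵥ L *ᵥ v).re ≤ α * (star v ⬝ᵥ v).re)
    (a : ℝ) (ha : 0 < a) (m : ℕ) :
    ‖(((Real.exp (-(2 * π * a)) : ℝ) - 1 : ℂ) /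
          (((Real.exp (4 * π * a) : ℝ) - 1 : ℂ) *
            ∏ r ∈ Finset.Icc (-(m : ℤ)) (m : ℤ),
              (((r : ℂ) - Complex.I) / ((r : ℂ) + 2 * Complex.I)))) •
        NormedSpace.exp ((T : ℂ) • ((-Complex.I) • H + (2 : ℂ) • L))‖ ≤
      Real.sinh (2 * π) * Real.exp (2 * T * α) / (π * (Real.exp (4 * π * a) - 1)) := by
  have hexp : ‖NormedSpace.exp ((T : ℂ) • ((-Complex.I) • H + (2 : ℂ) • L))‖ ≤
      Real.exp (2 * T * α) := by
    refine norm_exp_le_of_re_star_dotProduct_mulVec_le fun v => ?_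
    rw [hH.re_star_dotProduct_smul_neg_I_smul_add_mulVec, mul_assoc (2 * T)]
    exact mul_le_mul_of_nonneg_left (hα v) (by positivity)
  have hnum : ‖((Real.exp (-(2 * π * a)) : ℝ) - 1 : ℂ)‖ ≤ 1 := by
    rw [← ofReal_one, ← ofReal_sub, norm_real, Real.norm_eq_abs]
    exact abs_exp_sub_one_le_one (neg_nonpos.mpr (by positivity))
  have hpos : 0 < Real.exp (4 * π * a) - 1 :=
    sub_pos.mpr (Real.one_lt_exp_iff.mpr (by positivity))
  have hden : ‖((Real.exp (4 * π * a) : ℝ) - 1 : ℂ)‖ = Real.exp (4 * π * a) - 1 := by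
    rw [← ofReal_one, ← ofReal_sub, norm_real, Real.norm_eq_abs, abs_of_pos hpos]
  have hsinh : 0 < Real.sinh (2 * π) := Real.sinh_pos_iff.mpr (by positivity)
  have hprod : π / Real.sinh (2 * π) ≤
      ‖∏ r ∈ Icc (-(m : ℤ)) m, ((r : ℂ) - I) / ((r : ℂ) + 2 * I)‖ :=
    (div_le_div_of_nonneg_right (Real.self_le_sinh_iff.mpr Real.pi_nonneg) hsinh.le).trans
      (sinh_pi_div_sinh_two_pi_le_norm_prod m)
  rw [norm_smul, norm_div, norm_mul, hden]
  calc _ ≤ 1 / ((Real.exp (4 * π * a) - 1) * (π / Real.sinh (2 * π))) *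
        Real.exp (2 * T * α) := by gcongr
    _ = _ := by field_simp

/-- **Auxiliary-pole error bound for the pole `2i`** (second error estimate in the proof
of Theorem 3, time-independent form). For Hermitian `H, L` with `⟨v, Lv⟩ ≤ α‖v‖²`,
`T ≥ 0`, `a > 0` and `m ≥ 1`,
`‖(e^{-2πa} - 1)·exp(T(-iH + 2L)) / ((e^{4πa} - 1)·∏_{r=-m}^{m} (r-i)/(r+2i))‖
  ≤ sinh(2π)·e^{2Tα}/(π·(e^{4πa} - 1))`. -/
theorem auxiliary_pole_two_i_bound
    (d : ℕ) (H L : Matrix (Fin d) (Fin d) ℂ)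
    (hH : H.IsHermitian) (hL : L.IsHermitian)
    (T : ℝ) (hT : 0 ≤ T)
    (α : ℝ) (hα : ∀ v : Fin d → ℂ, (star v ⬝ᵥ L *ᵥ v).re ≤ α * (star v ⬝ᵥ v).re)
    (a : ℝ) (ha : 0 < a) (m : ℕ) (hm : 1 ≤ m) :
    ‖(((Real.exp (-(2 * π * a)) : ℝ) - 1 : ℂ) /
          (((Real.exp (4 * π * a) : ℝ) - 1 : ℂ) *
            ∏ r ∈ Finset.Icc (-(m : ℤ)) (m : ℤ),
              (((r : ℂ) - Complex.I) / ((r : ℂ) + 2 * Complex.I)))) •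
        NormedSpace.exp ((T : ℂ) • ((-Complex.I) • H + (2 : ℂ) • L))‖ ≤
      Real.sinh (2 * π) * Real.exp (2 * T * α) / (π * (Real.exp (4 * π * a) - 1)) :=
  auxiliary_pole_two_i_bound_general d H L hH T hT α hα a ha m
end
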